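/- Fix a double partition (μ,λ), and for n ≥ 0 and i ≥ 0 let β_i(n) ∈ ℚ be the coefficient of z^i in g_n(μ,λ) · ∏_{k=1}^n (1-z^{2k}). Then for every i ≥ 0 the sequence n ↦ β_i(n) converges (indeed is eventually constant), and Σ_{i≥0} (lim_{n→∞} β_i(n)) z^i = (1/(v_μ v_λ)) · ∏_{r≥1} (1-z^r)^{-n_r(μ)} · ∏_{r≥1} (1+z^r)^{-n_r(λ)} as an identity in ℚ[[z]]. -/

import Mathlib

open Finset PowerSeries Filter

/-- `v_μ = ∏_{r≥1} n_r(μ)! · (2r)^{n_r(μ)}`. -/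
def vOf (mu : Multiset ℕ) : ℕ :=
  ∏ r ∈ mu.toFinset, Nat.factorial (mu.count r) * (2 * r) ^ (mu.count r)

/-- `binom(ν,μ) = ∏_{r≥1} C(n_r(ν), n_r(μ))`. -/
def binomOf (nu mu : Multiset ℕ) : ℕ :=
  ∏ r ∈ mu.toFinset, Nat.choose (nu.count r) (mu.count r)

/-- `∏_{r≥1} (1-z^r)^{-n_r(ν)} ∈ ℚ[[z]]`. -/
noncomputable def facMinus (nu : Multiset ℕ) : PowerSeries ℚ :=
  ∏ r ∈ nu.toFinset, ((1 - (PowerSeries.X : PowerSeries ℚ) ^ r)⁻¹) ^ (nu.count r)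

/-- `∏_{r≥1} (1+z^r)^{-n_r(κ)} ∈ ℚ[[z]]`. -/
noncomputable def facPlus (ka : Multiset ℕ) : PowerSeries ℚ :=
  ∏ r ∈ ka.toFinset, ((1 + (PowerSeries.X : PowerSeries ℚ) ^ r)⁻¹) ^ (ka.count r)

/-- `g_n(μ,λ) ∈ ℚ[[z]]`; the sum over double partitions of `n` is realized as a sum over
`k ≤ n`, `ν ⊢ k`, `κ ⊢ n - k`. -/
noncomputable def gSer (muP lamP : Multiset ℕ) (n : ℕ) : PowerSeries ℚ :=
  ∑ k ∈ Finset.range (n + 1), ∑ nu : Nat.Partition k, ∑ ka : Nat.Partition (n - k),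
    PowerSeries.C
        (((binomOf nu.parts muP : ℚ) * (binomOf ka.parts lamP : ℚ)) /
          ((vOf nu.parts : ℚ) * (vOf ka.parts : ℚ))) *
      facMinus nu.parts * facPlus ka.parts

/-- the twisted Betti number `β_i(n)`: the coefficient of `z^i` in
`g_n(μ,λ) · ∏_{k=1}^n (1-z^{2k})`. -/
noncomputable def betaC (muP lamP : Multiset ℕ) (i n : ℕ) : ℚ :=
  PowerSeries.coeff i
    (gSer muP lamP n * ∏ k ∈ Finset.Icc 1 n, (1 - (PowerSeries.X : PowerSeries ℚ) ^ (2 * k)))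

/-!
For `g : ℕ → R` put `Z_g(t) = Σ_k t^k Σ_{ν ⊢ k} v_ν⁻¹ ∏_{r ∈ ν} g(r) = exp (Σ_r g(r) t^r / 2r)`;
counting parts gives the differential equation `Z_g' = (Σ_r g(r+1) t^r / 2) Z_g`.
Since `binom(μ + ρ, μ) v_μ v_ρ = v_{μ+ρ}`, the weighted sum over `ν ⊢ k` in `g_n(μ,λ)` is
`v_μ⁻¹ ∏_{r ∈ μ} g(r) · [t^{k - |μ|}] Z_g`, so `g_n(μ,λ)` is the claimed stable series times
`[t^m] Z₋ Z₊`, where `m = n - |μ| - |λ|`, `g₋(r) = (1 - z^r)⁻¹` and `g₊(r) = (1 + z^r)⁻¹`.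
Because `(g₋(r) + g₊(r)) / 2 = (1 - z^{2r})⁻¹`, a q-analogue of `Σ_{r=1}^m 1 = m` shows that
`[t^m] Z₋ Z₊ = ∏_{k=1}^m (1 - z^{2k})⁻¹`. Multiplying by `∏_{k=1}^n (1 - z^{2k})` thus leaves
the stable series times `∏_{k=m+1}^n (1 - z^{2k}) ≡ 1 mod z^{m+1}`, which does not change the
coefficient of `z^i` once `i ≤ m`.
-/

theorem vOf_eq_prod_of_subset {s : Multiset ℕ} {t : Finset ℕ} (h : s.toFinset ⊆ t) :
    vOf s = ∏ r ∈ t, (s.count r).factorial * (2 * r) ^ s.count r :=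
  prod_subset h fun r _ hr => by simp [Multiset.count_eq_zero_of_notMem (by simpa using hr)]

theorem binomOf_eq_prod_of_subset (ν : Multiset ℕ) {s : Multiset ℕ} {t : Finset ℕ}
    (h : s.toFinset ⊆ t) : binomOf ν s = ∏ r ∈ t, (ν.count r).choose (s.count r) :=
  prod_subset h fun r _ hr => by simp [Multiset.count_eq_zero_of_notMem (by simpa using hr)]

theorem vOf_add (s t : Multiset ℕ) : vOf (s + t) = binomOf (s + t) s * (vOf s * vOf t) := by
  classical
  have hs : s.toFinset ⊆ (s + t).toFinset := by simp [Multiset.toFinset_add]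
  have ht : t.toFinset ⊆ (s + t).toFinset := by simp [Multiset.toFinset_add]
  rw [vOf, binomOf_eq_prod_of_subset _ hs, vOf_eq_prod_of_subset hs, vOf_eq_prod_of_subset ht,
    ← prod_mul_distrib, ← prod_mul_distrib]
  refine prod_congr rfl fun r _ => ?_
  rw [Multiset.count_add, ← Nat.add_choose_mul_factorial_mul_factorial, add_comm, pow_add,
    Nat.choose_symm_add]
  ring

theorem vOf_pos {s : Multiset ℕ} (hs : ∀ r ∈ s, 0 < r) : 0 < vOf s :=
  prod_pos fun r hr => by have := hs r (Multiset.mem_toFinset.1 hr); positivity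

theorem vOf_singleton (r : ℕ) : vOf {r} = 2 * r := by simp [vOf]

theorem binomOf_singleton (ν : Multiset ℕ) (r : ℕ) : binomOf ν {r} = ν.count r := by
  simp [binomOf]

theorem binomOf_eq_zero_of_not_le {ν s : Multiset ℕ} (h : ¬ s ≤ ν) : binomOf ν s = 0 := by
  obtain ⟨r, hr⟩ := not_forall.1 (mt Multiset.le_iff_count.2 h)
  exact prod_eq_zero (Multiset.mem_toFinset.2 (Multiset.count_pos.1 (by omega)))
    (Nat.choose_eq_zero_of_lt (not_le.1 hr))

namespace Nat.Partition

def partitionWithSubmultisetEquiv {n : ℕ} {μ : Multiset ℕ} (hμ : ∀ r ∈ μ, 0 < r)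
    (hn : μ.sum ≤ n) : {p : n.Partition // μ ≤ p.parts} ≃ (n - μ.sum).Partition where
  toFun p := by
    refine ⟨p.1.parts - μ, fun hi => p.1.parts_pos (Multiset.mem_of_le tsub_le_self hi), ?_⟩
    have := congrArg Multiset.sum (add_tsub_cancel_of_le p.2)
    rw [Multiset.sum_add, p.1.parts_sum] at this
    omega
  invFun q := ⟨⟨μ + q.parts, by grind, by simp [q.parts_sum, hn]⟩,
    Multiset.le_add_right _ _⟩
  left_inv p := Subtype.ext <| Nat.Partition.ext <| add_tsub_cancel_of_le p.2
  right_inv q := Nat.Partition.ext <| add_tsub_cancel_left _ _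

theorem sum_eq_sum_add_parts {M : Type*} [AddCommMonoid M] {n : ℕ} {μ : Multiset ℕ}
    (hμ : ∀ r ∈ μ, 0 < r) (hn : μ.sum ≤ n) (f : Multiset ℕ → M)
    (hf : ∀ p : n.Partition, ¬ μ ≤ p.parts → f p.parts = 0) :
    ∑ p : n.Partition, f p.parts = ∑ q : (n - μ.sum).Partition, f (μ + q.parts) := by
  classical
  rw [← sum_filter_of_ne fun p _ h => not_not.1 (mt (hf p) h),
    sum_subtype _ (p := fun p : n.Partition => μ ≤ p.parts) (fun p => by simp),
    ← (partitionWithSubmultisetEquiv hμ hn).symm.sum_comp]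
  rfl

theorem sum_range_mul_count_parts {k : ℕ} (ν : k.Partition) :
    ∑ r ∈ range (k + 1), r * ν.parts.count r = k := by
  classical
  have hsub : ν.parts.toFinset ⊆ range (k + 1) := fun r hr =>
    mem_range.2 (Nat.lt_succ_of_le (Nat.Partition.le_of_mem_parts (Multiset.mem_toFinset.1 hr)))
  conv_rhs => rw [← ν.parts_sum, Finset.sum_multiset_count_of_subset _ _ hsub]
  simp [mul_comm]

end Nat.Partition

section CycleSum

variable {R : Type*} [CommRing R] [Algebra ℚ R]

noncomputable def cycleSum (g : ℕ → R) (k : ℕ) : R :=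
  ∑ ν : Nat.Partition k, (vOf ν.parts : ℚ)⁻¹ • (ν.parts.map g).prod

theorem cycleSum_zero (g : ℕ → R) : cycleSum g 0 = 1 := by
  rw [cycleSum, Fintype.sum_unique]
  simp [vOf]

theorem mk_sum_binomOf_div_vOf_smul {μ : Multiset ℕ} (hμ : ∀ r ∈ μ, 0 < r) (g : ℕ → R) :
    PowerSeries.mk (fun k => ∑ ν : Nat.Partition k,
        ((binomOf ν.parts μ : ℚ) / vOf ν.parts) • (ν.parts.map g).prod) =
      (vOf μ : ℚ)⁻¹ • (C (μ.map g).prod * X ^ μ.sum * PowerSeries.mk (cycleSum g)) := by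
  ext k
  rw [coeff_mk, coeff_smul, mul_assoc, coeff_C_mul, coeff_X_pow_mul']
  split_ifs with hk
  · rw [Nat.Partition.sum_eq_sum_add_parts hμ hk
      (fun s => ((binomOf s μ : ℚ) / vOf s) • (s.map g).prod)
      fun ν hν => by simp [binomOf_eq_zero_of_not_le hν], coeff_mk, cycleSum, mul_sum, smul_sum]
    refine sum_congr rfl fun ρ _ => ?_
    have hμv := vOf_pos hμ
    have hρv := vOf_pos fun r hr => ρ.parts_pos hr
    have hb : binomOf (μ + ρ.parts) μ ≠ 0 := by
      have h := vOf_pos fun r hr => (Multiset.mem_add.1 hr).elim (hμ r) ρ.parts_pos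
      rw [vOf_add] at h
      exact left_ne_zero_of_mul h.ne'
    rw [Multiset.map_add, Multiset.prod_add, mul_smul_comm, smul_smul, vOf_add]
    congr 1
    push_cast
    field_simp
  · rw [mul_zero, smul_zero]
    refine sum_eq_zero fun ν _ => ?_
    have hle : ¬ μ ≤ ν.parts := by
      intro h
      obtain ⟨u, hu⟩ := Multiset.le_iff_exists_add.1 h
      have := ν.parts_sum
      rw [hu, Multiset.sum_add] at this
      omega
    simp [binomOf_eq_zero_of_not_le hle]

theorem succ_mul_cycleSum_succ (g : ℕ → R) (m : ℕ) :
    ((m + 1 : ℕ) : R) * cycleSum g (m + 1) =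
      ∑ i ∈ range (m + 1), ((2 : ℚ)⁻¹ • g (i + 1)) * cycleSum g (m - i) := by
  have hpart : ∀ i ∈ range (m + 1), ∑ ν : Nat.Partition (m + 1),
      ((ν.parts.count (i + 1) : ℚ) / vOf ν.parts) • (ν.parts.map g).prod =
        (2 * (i + 1 : ℕ) : ℚ)⁻¹ • (g (i + 1) * cycleSum g (m - i)) := by
    intro i hi
    have := congrArg (coeff (m + 1))
      (mk_sum_binomOf_div_vOf_smul (μ := {i + 1}) (by simp) g)
    simpa [binomOf_singleton, vOf_singleton, mul_assoc, coeff_C_mul, coeff_X_pow_mul',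
      Nat.lt_succ_iff.1 (mem_range.1 hi)] using this
  calc ((m + 1 : ℕ) : R) * cycleSum g (m + 1)
      = ∑ r ∈ range (m + 2), (r : ℚ) • ∑ ν : Nat.Partition (m + 1),
          ((ν.parts.count r : ℚ) / vOf ν.parts) • (ν.parts.map g).prod := by
        simp_rw [smul_sum, smul_smul]
        rw [sum_comm, cycleSum, mul_sum]
        refine sum_congr rfl fun ν _ => ?_
        have hk : ((m + 1 : ℕ) : ℚ) = ∑ r ∈ range (m + 2), (r : ℚ) * ν.parts.count r := by
          exact_mod_cast (ν.sum_range_mul_count_parts).symm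
        rw [← sum_smul, ← nsmul_eq_mul, ← Nat.cast_smul_eq_nsmul ℚ, smul_smul, hk, sum_mul]
        exact congrArg (· • _) (sum_congr rfl fun r _ => by ring)
    _ = ∑ i ∈ range (m + 1), ((i + 1 : ℕ) : ℚ) •
          (2 * (i + 1 : ℕ) : ℚ)⁻¹ • (g (i + 1) * cycleSum g (m - i)) := by
        rw [sum_range_succ', Nat.cast_zero, zero_smul, add_zero]
        exact sum_congr rfl fun i hi => by rw [hpart i hi]
    _ = _ := sum_congr rfl fun i _ => by
        rw [smul_smul, smul_mul_assoc]
        congr 1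
        field_simp

theorem derivative_mk_cycleSum (g : ℕ → R) :
    d⁄dX R (PowerSeries.mk (cycleSum g)) =
      PowerSeries.mk (fun i => (2 : ℚ)⁻¹ • g (i + 1)) * PowerSeries.mk (cycleSum g) := by
  ext m
  rw [coeff_derivative, coeff_mk, coeff_mul, Nat.sum_antidiagonal_eq_sum_range_succ_mk]
  simp only [coeff_mk]
  rw [mul_comm]
  exact_mod_cast succ_mul_cycleSum_succ g m

theorem derivative_mk_cycleSum_mul_mk_cycleSum (g h : ℕ → R) :
    d⁄dX R (PowerSeries.mk (cycleSum g) * PowerSeries.mk (cycleSum h)) =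
      PowerSeries.mk (fun i => (2 : ℚ)⁻¹ • (g (i + 1) + h (i + 1))) *
        (PowerSeries.mk (cycleSum g) * PowerSeries.mk (cycleSum h)) := by
  have hU : PowerSeries.mk (fun i => (2 : ℚ)⁻¹ • (g (i + 1) + h (i + 1))) =
      PowerSeries.mk (fun i => (2 : ℚ)⁻¹ • g (i + 1)) +
        PowerSeries.mk (fun i => (2 : ℚ)⁻¹ • h (i + 1)) := by
    ext i
    simp [smul_add]
  rw [Derivation.leibniz, derivative_mk_cycleSum, derivative_mk_cycleSum, smul_eq_mul,
    smul_eq_mul, hU]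
  ring

end CycleSum

section ProdOneSubPow

variable {R : Type*} [CommRing R]

theorem prod_Icc_one_eq_prod_range_sub {M : Type*} [CommMonoid M] (f : ℕ → M) (n : ℕ) :
    ∏ k ∈ Icc 1 n, f k = ∏ k ∈ range n, f (n - k) := by
  induction n with
  | zero => simp
  | succ n ih =>
    rw [prod_Icc_succ_top (by omega), ih, prod_range_succ' _ n]
    simp

theorem sum_mul_prod_one_sub_pow {u : ℕ → R} {q : R} (hu : ∀ i, u i * (1 - q ^ (i + 1)) = 1)
    (n : ℕ) : ∑ i ∈ range n, u i * ∏ k ∈ range (i + 1), (1 - q ^ (n - k)) = n := by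
  induction n with
  | zero => simp
  | succ n ih =>
    set T : ℕ → R := fun i => ∏ k ∈ range i, (1 - q ^ (n - k)) with hT
    -- each summand is a telescoping difference plus the corresponding summand for `n`
    have hterm : ∀ i ∈ range (n + 1), u i * ∏ k ∈ range (i + 1), (1 - q ^ (n + 1 - k)) =
        (T i - T (i + 1)) + u i * T (i + 1) := by
      intro i hi
      have hsplit :
          (1 : R) - q ^ (n + 1) = (1 - q ^ (i + 1)) + q ^ (i + 1) * (1 - q ^ (n - i)) := by
        rw [mul_sub, mul_one, ← pow_add, show i + 1 + (n - i) = n + 1 by grind]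
        ring
      have hT1 : T (i + 1) = T i * (1 - q ^ (n - i)) := prod_range_succ _ _
      have hL : ∏ k ∈ range (i + 1), (1 - q ^ (n + 1 - k)) = T i * (1 - q ^ (n + 1)) := by
        rw [prod_range_succ']
        simp [hT]
      rw [hL, hT1, hsplit]
      linear_combination (T i * q ^ (n - i)) * hu i
    rw [sum_congr rfl hterm, sum_add_distrib, sum_range_sub', sum_range_succ, ih]
    simp [hT, prod_range_succ, add_comm]

theorem coeff_mul_prod_one_sub_pow_eq_one [Algebra ℚ R] {A U : R⟦X⟧} {q : R}
    (hU : ∀ i, coeff i U * (1 - q ^ (i + 1)) = 1) (hA₀ : constantCoeff A = 1)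
    (hA : d⁄dX R A = U * A) (m : ℕ) : coeff m A * ∏ k ∈ Icc 1 m, (1 - q ^ k) = 1 := by
  rw [prod_Icc_one_eq_prod_range_sub]
  induction m using Nat.strong_induction_on with
  | _ m ih =>
  cases m with
  | zero => simpa using hA₀
  | succ m =>
    have hrec : ((m + 1 : ℕ) : R) * coeff (m + 1) A =
        ∑ i ∈ range (m + 1), coeff i U * coeff (m - i) A := by
      have := congrArg (coeff m) hA
      rw [coeff_derivative, coeff_mul, Nat.sum_antidiagonal_eq_sum_range_succ_mk] at this
      rw [mul_comm, ← this]
      push_cast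
      rfl
    have hunit : IsUnit ((m + 1 : ℕ) : R) := by
      simpa using (isUnit_iff_ne_zero.2 (Nat.cast_ne_zero.2 m.succ_ne_zero :
        ((m + 1 : ℕ) : ℚ) ≠ 0)).map (algebraMap ℚ R)
    refine hunit.mul_left_cancel ?_
    rw [← mul_assoc, hrec, mul_one, sum_mul]
    conv_rhs => rw [← sum_mul_prod_one_sub_pow hU (m + 1)]
    refine sum_congr rfl fun i hi => ?_
    have hi' : i ≤ m := Nat.lt_succ_iff.1 (mem_range.1 hi)
    have hsplit : ∏ k ∈ range (m + 1), (1 - q ^ (m + 1 - k)) =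
        (∏ k ∈ range (i + 1), (1 - q ^ (m + 1 - k))) *
          ∏ k ∈ range (m - i), (1 - q ^ (m - i - k)) := by
      have := prod_range_add (fun k => 1 - q ^ (m + 1 - k)) (i + 1) (m - i)
      rw [show i + 1 + (m - i) = m + 1 by omega] at this
      rw [this]
      refine congrArg _ (prod_congr rfl fun k _ => ?_)
      rw [show m + 1 - (i + 1 + k) = m - i - k by omega]
    rw [hsplit]
    linear_combination (coeff i U * ∏ k ∈ range (i + 1), (1 - q ^ (m + 1 - k))) *
      ih (m - i) (by omega)

theorem coeff_mul_eq_of_X_pow_dvd_sub_one {F G : R⟦X⟧} {i : ℕ}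
    (h : X ^ (i + 1) ∣ G - 1) : coeff i (F * G) = coeff i F := by
  obtain ⟨H, hH⟩ := h
  rw [show F * G = F + X ^ (i + 1) * (F * H) by linear_combination F * hH, map_add,
    coeff_X_pow_mul', if_neg (by omega), add_zero]

theorem X_pow_dvd_prod_one_sub_X_pow_sub_one {N : ℕ} {s : Finset ℕ}
    {e : ℕ → ℕ} (h : ∀ k ∈ s, N ≤ e k) : (X : R⟦X⟧) ^ N ∣ ∏ k ∈ s, (1 - X ^ e k) - 1 := by
  refine prod_induction _ (fun G => X ^ N ∣ G - 1) (fun G H hG hH => ?_) (by simp)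
    fun k hk => ?_
  · rw [show G * H - 1 = (G - 1) * H + (H - 1) by ring]
    exact dvd_add (dvd_mul_of_dvd_left hG H) hH
  · simpa using pow_dvd_pow X (h k hk)

end ProdOneSubPow

theorem half_smul_inv_one_sub_add_inv_one_add_mul {r : ℕ} (hr : r ≠ 0) :
    ((2 : ℚ)⁻¹ • ((1 - X ^ r : ℚ⟦X⟧)⁻¹ + (1 + X ^ r)⁻¹)) * (1 - (X ^ 2) ^ r) = 1 := by
  have hsub : (1 - X ^ r : ℚ⟦X⟧)⁻¹ * (1 - X ^ r) = 1 :=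
    PowerSeries.inv_mul_cancel _ (by simp [zero_pow hr])
  have hadd : (1 + X ^ r : ℚ⟦X⟧)⁻¹ * (1 + X ^ r) = 1 :=
    PowerSeries.inv_mul_cancel _ (by simp [zero_pow hr])
  have htwo : C (2 : ℚ)⁻¹ * 2 = (1 : ℚ⟦X⟧) := by
    rw [← map_ofNat C 2, ← map_mul]
    norm_num
  rw [smul_eq_C_mul, ← pow_mul, mul_comm 2 r, pow_mul]
  linear_combination
    C (2 : ℚ)⁻¹ * (1 + X ^ r) * hsub + C (2 : ℚ)⁻¹ * (1 - X ^ r) * hadd + htwo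

/-- By Molien's theorem, the Hilbert series of the invariants of the hyperoctahedral group `B_m`
acting on `ℚ[x₁, …, x_m]`; `hyperoctahedralMolien_mul_prod` is its product formula. -/
noncomputable def hyperoctahedralMolien (m : ℕ) : ℚ⟦X⟧ :=
  coeff m (PowerSeries.mk (cycleSum fun r => (1 - X ^ r : ℚ⟦X⟧)⁻¹) *
    PowerSeries.mk (cycleSum fun r => (1 + X ^ r : ℚ⟦X⟧)⁻¹))

theorem hyperoctahedralMolien_mul_prod (m : ℕ) :
    hyperoctahedralMolien m * ∏ k ∈ Icc 1 m, (1 - X ^ (2 * k) : ℚ⟦X⟧) = 1 := by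
  simp_rw [pow_mul]
  refine coeff_mul_prod_one_sub_pow_eq_one
    (U := PowerSeries.mk fun i =>
      (2 : ℚ)⁻¹ • ((1 - X ^ (i + 1) : ℚ⟦X⟧)⁻¹ + (1 + X ^ (i + 1))⁻¹))
    (fun i => by rw [coeff_mk]; exact half_smul_inv_one_sub_add_inv_one_add_mul i.succ_ne_zero)
    ?_ ?_ m
  · rw [map_mul, ← coeff_zero_eq_constantCoeff_apply, ← coeff_zero_eq_constantCoeff_apply,
      coeff_mk, coeff_mk, cycleSum_zero, cycleSum_zero, mul_one]
  · exact derivative_mk_cycleSum_mul_mk_cycleSum _ _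

theorem facMinus_eq_prod_map (s : Multiset ℕ) :
    facMinus s = (s.map fun r => (1 - X ^ r : ℚ⟦X⟧)⁻¹).prod :=
  (prod_multiset_map_count s _).symm

theorem facPlus_eq_prod_map (s : Multiset ℕ) :
    facPlus s = (s.map fun r => (1 + X ^ r : ℚ⟦X⟧)⁻¹).prod :=
  (prod_multiset_map_count s _).symm

theorem gSer_eq_mul_hyperoctahedralMolien {A B : ℕ} (mu : Nat.Partition A)
    (lam : Nat.Partition B) {n : ℕ} (h : A + B ≤ n) :
    gSer mu.parts lam.parts n = C (1 / ((vOf mu.parts : ℚ) * vOf lam.parts)) *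
      facMinus mu.parts * facPlus lam.parts * hyperoctahedralMolien (n - (A + B)) := by
  have hgen : ∀ {k : ℕ} (p : Nat.Partition k) (g : ℕ → ℚ⟦X⟧),
      PowerSeries.mk (fun j => ∑ ν : Nat.Partition j,
        ((binomOf ν.parts p.parts : ℚ) / vOf ν.parts) • (ν.parts.map g).prod) =
      (vOf p.parts : ℚ)⁻¹ • (C (p.parts.map g).prod * X ^ k * PowerSeries.mk (cycleSum g)) :=
    fun p g => by
      simpa [p.parts_sum] using mk_sum_binomOf_div_vOf_smul (fun r hr => p.parts_pos hr) g
  calc gSer mu.parts lam.parts n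
      = coeff n (PowerSeries.mk (fun j => ∑ ν : Nat.Partition j,
            ((binomOf ν.parts mu.parts : ℚ) / vOf ν.parts) •
              (ν.parts.map fun r => (1 - X ^ r : ℚ⟦X⟧)⁻¹).prod) *
          PowerSeries.mk (fun j => ∑ κ : Nat.Partition j,
            ((binomOf κ.parts lam.parts : ℚ) / vOf κ.parts) •
              (κ.parts.map fun r => (1 + X ^ r : ℚ⟦X⟧)⁻¹).prod)) := by
        rw [coeff_mul, Nat.sum_antidiagonal_eq_sum_range_succ_mk, gSer]
        refine sum_congr rfl fun k _ => ?_
        rw [coeff_mk, coeff_mk, sum_mul_sum]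
        refine sum_congr rfl fun ν _ => sum_congr rfl fun κ _ => ?_
        rw [facMinus_eq_prod_map, facPlus_eq_prod_map, smul_eq_C_mul, smul_eq_C_mul,
          mul_div_mul_comm, map_mul]
        ring
    _ = _ := by
        rw [hgen, hgen, smul_mul_smul_comm, coeff_smul,
          show ∀ a b (F G : ℚ⟦X⟧⟦X⟧), C a * X ^ A * F * (C b * X ^ B * G) =
            C (a * b) * (X ^ (A + B) * (F * G)) from
            fun a b F G => by rw [map_mul, pow_add]; ring,
          coeff_C_mul, coeff_X_pow_mul', if_pos h, facMinus_eq_prod_map, facPlus_eq_prod_map,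
          smul_eq_C_mul, one_div, mul_inv, map_mul, hyperoctahedralMolien]
        ring

/-- **Corollary 1.11**: for each `i` the sequence `n ↦ β_i(n)` is eventually constant
(in particular convergent), and the generating function of the stable values is
`(1/(v_μ v_λ)) ∏_{r≥1} (1-z^r)^{-n_r(μ)} ∏_{r≥1} (1+z^r)^{-n_r(λ)}`. -/
theorem stable_twisted_betti_genfun (A B : ℕ) (mu : Nat.Partition A)
    (lam : Nat.Partition B) :
    ∃ b : ℕ → ℚ,
      (∀ i : ℕ, ∀ᶠ n in atTop, betaC mu.parts lam.parts i n = b i) ∧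
      (PowerSeries.mk b
        = PowerSeries.C (1 / ((vOf mu.parts : ℚ) * (vOf lam.parts : ℚ))) *
            facMinus mu.parts * facPlus lam.parts) := by
  refine ⟨fun i => coeff i (C (1 / ((vOf mu.parts : ℚ) * (vOf lam.parts : ℚ))) *
    facMinus mu.parts * facPlus lam.parts), fun i => ?_, by ext; simp⟩
  filter_upwards [eventually_ge_atTop (A + B + i)] with n hn
  have hsplit : ∏ k ∈ Icc 1 n, (1 - X ^ (2 * k) : ℚ⟦X⟧) =
      (∏ k ∈ Icc 1 (n - (A + B)), (1 - X ^ (2 * k))) *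
        ∏ k ∈ Ioc (n - (A + B)) n, (1 - X ^ (2 * k)) := by
    have hIcc : ∀ m, Icc 1 m = Ioc 0 m := fun m => Icc_add_one_left_eq_Ioc 0 m
    rw [hIcc, hIcc, prod_Ioc_consecutive _ (Nat.zero_le _) (by omega)]
  rw [betaC, gSer_eq_mul_hyperoctahedralMolien mu lam (by omega), hsplit, mul_assoc,
    ← mul_assoc (hyperoctahedralMolien _), hyperoctahedralMolien_mul_prod, one_mul,
    coeff_mul_eq_of_X_pow_dvd_sub_one
      (X_pow_dvd_prod_one_sub_X_pow_sub_one fun k hk => by grind)]
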